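/- Small-overlap divergence of Taylor transmission conditions above the shear cutoff (Theorem 3.4, last case): let k > ω/Cs be a Fourier frequency (so λ₁ = √(k² − ω²/Cs²) > 0 and λ₂ = √(k² − ω²/Cp²) > 0 are real) such that 2(Z₁ + Z₂) − K(λ₁ + λ₂) < 0. Then there exists δ₀ > 0 such that for every overlap δ with 0 < δ < δ₀, the quadratic Q_δ(z) = z² − (X_δ² + 2Y_δ)z + Y_δ² has a root of modulus strictly greater than 1; hence the overlapping Schwarz method with zeroth-order Taylor transmission conditions diverges at such frequencies when the overlap is too small. -/

import Mathlib

noncomputable section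

open Complex

/-- `λ₁ = √(k² − ω²/Cs²)`, principal branch of the complex square root. -/
def lam1 (ω Cs k : ℝ) : ℂ := ((k ^ 2 - ω ^ 2 / Cs ^ 2 : ℝ) : ℂ) ^ ((1 : ℂ) / 2)

/-- `λ₂ = √(k² − ω²/Cp²)`, principal branch of the complex square root. -/
def lam2 (ω Cp k : ℝ) : ℂ := ((k ^ 2 - ω ^ 2 / Cp ^ 2 : ℝ) : ℂ) ^ ((1 : ℂ) / 2)

/-- `Z₁ = Cs³(k² + λ₁²)² + ω²Cp·k²`. -/
def Z1 (ω Cs Cp k : ℝ) : ℂ :=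
  (Cs : ℂ) ^ 3 * ((k : ℂ) ^ 2 + (lam1 ω Cs k) ^ 2) ^ 2 + (ω : ℂ) ^ 2 * (Cp : ℂ) * (k : ℂ) ^ 2

/-- `Z₂ = (4Cs³k² + Cpω²)λ₁λ₂`. -/
def Z2 (ω Cs Cp k : ℝ) : ℂ :=
  (4 * (Cs : ℂ) ^ 3 * (k : ℂ) ^ 2 + (Cp : ℂ) * (ω : ℂ) ^ 2) * lam1 ω Cs k * lam2 ω Cp k

/-- `K = 2k(Cpω² + 2Cs³(k² + λ₁²))`. -/
def Kq (ω Cs Cp k : ℝ) : ℂ :=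
  2 * (k : ℂ) * ((Cp : ℂ) * (ω : ℂ) ^ 2 + 2 * (Cs : ℂ) ^ 3 * ((k : ℂ) ^ 2 + (lam1 ω Cs k) ^ 2))

/-- `D = −Z₁ + Z₂ + iω³(λ₁ + λ₂Cp/Cs)`. -/
def Dq (ω Cs Cp k : ℝ) : ℂ :=
  -Z1 ω Cs Cp k + Z2 ω Cs Cp k +
    Complex.I * (ω : ℂ) ^ 3 * (lam1 ω Cs k + lam2 ω Cp k * (Cp : ℂ) / (Cs : ℂ))

/-- `b₁₁ = (−Z₁ − Z₂ − iω³(λ₁ − λ₂Cp/Cs))/D`. -/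
def b11 (ω Cs Cp k : ℝ) : ℂ :=
  (-Z1 ω Cs Cp k - Z2 ω Cs Cp k -
    Complex.I * (ω : ℂ) ^ 3 * (lam1 ω Cs k - lam2 ω Cp k * (Cp : ℂ) / (Cs : ℂ))) / Dq ω Cs Cp k

/-- `b₁₂ = iλ₂K/D`. -/
def b12 (ω Cs Cp k : ℝ) : ℂ :=
  Complex.I * lam2 ω Cp k * Kq ω Cs Cp k / Dq ω Cs Cp k

/-- `b₂₁ = −iλ₁K/D`. -/
def b21 (ω Cs Cp k : ℝ) : ℂ :=
  -Complex.I * lam1 ω Cs k * Kq ω Cs Cp k / Dq ω Cs Cp k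

/-- `b₂₂ = (−Z₁ − Z₂ + iω³(λ₁ − λ₂Cp/Cs))/D`. -/
def b22 (ω Cs Cp k : ℝ) : ℂ :=
  (-Z1 ω Cs Cp k - Z2 ω Cs Cp k +
    Complex.I * (ω : ℂ) ^ 3 * (lam1 ω Cs k - lam2 ω Cp k * (Cp : ℂ) / (Cs : ℂ))) / Dq ω Cs Cp k

/-- `X_δ = e^{−λ₁δ}b₁₁ − e^{−λ₂δ}b₂₂`. -/
def Xd (ω Cs Cp k δ : ℝ) : ℂ :=
  Complex.exp (-(lam1 ω Cs k) * (δ : ℂ)) * b11 ω Cs Cp k -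
    Complex.exp (-(lam2 ω Cp k) * (δ : ℂ)) * b22 ω Cs Cp k

/-- `Y_δ = e^{−(λ₁+λ₂)δ}(b₁₁b₂₂ − b₁₂b₂₁)`. -/
def Yd (ω Cs Cp k δ : ℝ) : ℂ :=
  Complex.exp (-(lam1 ω Cs k + lam2 ω Cp k) * (δ : ℂ)) *
    (b11 ω Cs Cp k * b22 ω Cs Cp k - b12 ω Cs Cp k * b21 ω Cs Cp k)

/-- The quadratic `Q_δ(z) = z² − (X_δ² + 2Y_δ)z + Y_δ²` whose roots are the eigenvalues `r±`
of the double-iteration operator of the Schwarz method with zeroth-order Taylor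
transmission conditions. -/
def Qd (ω Cs Cp k δ : ℝ) (z : ℂ) : ℂ :=
  z ^ 2 - ((Xd ω Cs Cp k δ) ^ 2 + 2 * Yd ω Cs Cp k δ) * z + (Yd ω Cs Cp k δ) ^ 2

/-!
Above the shear cutoff `λ₁, λ₂ > 0` are real, so the numerator of `b₂₂` is the conjugate `N̄` of
the numerator `N` of `b₁₁`, and the identity `K² = 4 Z₁ (4 Cs³ k² + Cp ω²) − 4 ω⁶ Cp / Cs` gives
`det B = D̄ / D`. Hence `X_δ = (u N − v N̄) / D` and `Y_δ = u v D̄ / D` with `u = e^{−λ₁δ}`,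
`v = e^{−λ₂δ}`. The roots of `Q_δ` are the squares of the roots of `t² − X_δ t − Y_δ`, which by the
Schur–Cohn test has a root outside the unit disc once `1 − |Y|² < |X + X̄ Y|`. Squared and divided
by `(1 − u²v²)²`, this inequality tends as `δ → 0⁺` to
`|D|² < (Re N)² ((λ₂ − λ₁)/(λ₁ + λ₂))² + (Im N)²`, which by `|D|² = |N|² − λ₁λ₂K²` follows from
`K (λ₁ + λ₂) > 2 (Z₁ + Z₂) > 0`.
-/

open Real Filter Topology ComplexConjugate

theorem norm_add_sub_conj_mul_le {s t : ℂ} (hs : ‖s‖ ≤ 1) (ht : ‖t‖ ≤ 1) :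
    ‖s + t - conj (s + t) * (s * t)‖ ≤ 1 - ‖s * t‖ ^ 2 := by
  have key : s + t - conj (s + t) * (s * t)
      = s * ((1 - ‖t‖ ^ 2 : ℝ) : ℂ) + t * ((1 - ‖s‖ ^ 2 : ℝ) : ℂ) := by
    push_cast
    rw [map_add]
    linear_combination (-s) * mul_conj' t - t * mul_conj' s
  have hs' : 0 ≤ 1 - ‖s‖ ^ 2 := by nlinarith [norm_nonneg s]
  have ht' : 0 ≤ 1 - ‖t‖ ^ 2 := by nlinarith [norm_nonneg t]
  calc ‖s + t - conj (s + t) * (s * t)‖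
      ≤ ‖s‖ * (1 - ‖t‖ ^ 2) + ‖t‖ * (1 - ‖s‖ ^ 2) := by
        rw [key]
        refine (norm_add_le _ _).trans_eq ?_
        rw [norm_mul, norm_mul, norm_real, norm_real, Real.norm_of_nonneg hs',
          Real.norm_of_nonneg ht']
    _ ≤ 1 - ‖s * t‖ ^ 2 := by
        -- the slack is `(1 - ‖s‖) (1 - ‖t‖) (1 - ‖s‖ ‖t‖)`
        rw [norm_mul]
        nlinarith [mul_nonneg (mul_nonneg (sub_nonneg.2 hs) (sub_nonneg.2 ht))
          (sub_nonneg.2 (mul_le_one₀ hs (norm_nonneg t) ht))]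

/-- The Schur–Cohn test for a monic quadratic. -/
theorem exists_root_one_lt_norm_of_lt {X Y : ℂ} (h : 1 - ‖Y‖ ^ 2 < ‖X + conj X * Y‖) :
    ∃ t : ℂ, t ^ 2 - X * t - Y = 0 ∧ 1 < ‖t‖ := by
  obtain ⟨d, hd⟩ := IsAlgClosed.exists_pow_nat_eq (X ^ 2 + 4 * Y) two_pos
  by_contra! hle
  have hbound := norm_add_sub_conj_mul_le (hle ((X + d) / 2) (by linear_combination hd / 4))
    (hle ((X - d) / 2) (by linear_combination hd / 4))
  rw [show (X + d) / 2 + (X - d) / 2 = X by ring,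
    show (X + d) / 2 * ((X - d) / 2) = -Y by linear_combination -hd / 4,
    mul_neg, sub_neg_eq_add, norm_neg] at hbound
  linarith

theorem div_add_conj_div_mul_conj_div (A : ℂ) {D : ℂ} (hD : D ≠ 0) (ρ : ℝ) :
    A / D + conj (A / D) * (ρ * conj D / D) = (A + ρ * conj A) / D := by
  have : conj D ≠ 0 := (map_ne_zero _).2 hD
  rw [map_div₀]
  field_simp

theorem exists_root_one_lt_norm_of_normSq_lt {D : ℂ} (hD : D ≠ 0) (N : ℂ) {u v : ℝ}
    (hu : 0 ≤ u) (hv : 0 ≤ v) (huv : u * v < 1)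
    (h : normSq D < N.re ^ 2 * ((u - v) / (1 - u * v)) ^ 2
      + N.im ^ 2 * ((u + v) / (1 + u * v)) ^ 2) :
    ∃ z : ℂ, z ^ 2 - (((u * N - v * conj N) / D) ^ 2 + 2 * (u * v * conj D / D)) * z
      + (u * v * conj D / D) ^ 2 = 0 ∧ 1 < ‖z‖ := by
  suffices 1 - ‖(u * v * conj D / D : ℂ)‖ ^ 2
      < ‖(u * N - v * conj N) / D + conj ((u * N - v * conj N) / D) * (u * v * conj D / D)‖ by
    obtain ⟨t, ht, ht₁⟩ := exists_root_one_lt_norm_of_lt this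
    refine ⟨t ^ 2, ?_, by rw [norm_pow]; exact one_lt_pow₀ ht₁ two_ne_zero⟩
    -- `z² - (X² + 2Y) z + Y²` at `z = t²` factors as `(t² - X t - Y) (t² + X t - Y)`
    linear_combination (t ^ 2 + (u * N - v * conj N) / D * t - u * v * conj D / D) * ht
  have hW := div_add_conj_div_mul_conj_div (u * N - v * conj N) hD (u * v)
  push_cast at hW
  set A := (u * N - v * conj N : ℂ) + u * v * conj (u * N - v * conj N)
  have hA : normSq A = ((1 + u * v) * (u - v) * N.re) ^ 2 + ((1 - u * v) * (u + v) * N.im) ^ 2 := by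
    simp only [A, normSq_apply, map_sub, map_mul, conj_ofReal, RingHomCompTriple.comp_apply,
      RingHom.id_apply, add_re, sub_re, mul_re, ofReal_re, ofReal_im, zero_mul, sub_zero, conj_re,
      conj_im, mul_neg,
      neg_zero, mul_zero, mul_im, add_zero, sub_im, add_im, sub_neg_eq_add]
    ring
  have hDpos : 0 < ‖D‖ := norm_pos_iff.2 hD
  have h1 : 0 < 1 - u * v := sub_pos.2 huv
  have h2 : 0 < 1 + u * v := by positivity
  rw [hW, norm_div, norm_mul, norm_conj, mul_div_assoc, div_self hDpos.ne', mul_one, norm_div,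
    lt_div_iff₀ hDpos]
  have hnorm : ‖(u : ℂ) * v‖ = u * v := by
    rw [norm_mul, norm_real, norm_real, Real.norm_of_nonneg hu, Real.norm_of_nonneg hv]
  rw [hnorm]
  refine lt_of_pow_lt_pow_left₀ 2 (norm_nonneg _) ?_
  rw [mul_pow, Complex.sq_norm, Complex.sq_norm, hA]
  have hscaled := mul_lt_mul_of_pos_right h (by positivity : 0 < ((1 - u * v) * (1 + u * v)) ^ 2)
  field_simp at hscaled
  linear_combination hscaled

theorem tendsto_exp_sub_exp_div_one_sub_exp_mul_exp {l₁ l₂ : ℝ} (h : l₁ + l₂ ≠ 0) :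
    Tendsto (fun δ => (rexp (-l₁ * δ) - rexp (-l₂ * δ)) / (1 - rexp (-l₁ * δ) * rexp (-l₂ * δ)))
      (𝓝[≠] 0) (𝓝 ((l₂ - l₁) / (l₁ + l₂))) := by
  have he (l : ℝ) : HasDerivAt (fun δ => rexp (-l * δ)) (-l) 0 := by
    simpa using ((hasDerivAt_id (0 : ℝ)).const_mul (-l)).exp
  -- numerator and denominator vanish at `0`: compare their slopes
  have hf := hasDerivAt_iff_tendsto_slope.mp ((he l₁).sub (he l₂))
  have hg := hasDerivAt_iff_tendsto_slope.mp (((he l₁).mul (he l₂)).const_sub 1)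
  have hquot := hf.div hg (by simpa [add_comm] using h)
  convert hquot.congr' ?_ using 2
  · simp only [sub_neg_eq_add, mul_zero, Real.exp_zero, mul_one, mul_neg, one_mul, neg_add_rev,
      neg_neg]
    ring
  · filter_upwards [self_mem_nhdsWithin] with δ hδ
    simp [slope_def_field, div_div_div_cancel_right₀ (show δ ≠ 0 from hδ)]

theorem exists_forall_lt_exp_ratio {l₁ l₂ : ℝ} (h : l₁ + l₂ ≠ 0) {c x y : ℝ}
    (hc : c < x ^ 2 * ((l₂ - l₁) / (l₁ + l₂)) ^ 2 + y ^ 2) :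
    ∃ δ₀ > 0, ∀ δ, 0 < δ → δ < δ₀ →
      c < x ^ 2 * ((rexp (-l₁ * δ) - rexp (-l₂ * δ)) / (1 - rexp (-l₁ * δ) * rexp (-l₂ * δ))) ^ 2
        + y ^ 2 *
          ((rexp (-l₁ * δ) + rexp (-l₂ * δ)) / (1 + rexp (-l₁ * δ) * rexp (-l₂ * δ))) ^ 2 := by
  have hsum : Tendsto (fun δ => (rexp (-l₁ * δ) + rexp (-l₂ * δ))
      / (1 + rexp (-l₁ * δ) * rexp (-l₂ * δ))) (𝓝[≠] 0) (𝓝 1) := by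
    have hcont : Continuous fun δ => (rexp (-l₁ * δ) + rexp (-l₂ * δ))
        / (1 + rexp (-l₁ * δ) * rexp (-l₂ * δ)) :=
      Continuous.div (by fun_prop) (by fun_prop) fun δ => by positivity
    simpa using (hcont.tendsto 0).mono_left nhdsWithin_le_nhds
  have hlim := (((tendsto_exp_sub_exp_div_one_sub_exp_mul_exp h).pow 2).const_mul (x ^ 2)).add
    ((hsum.pow 2).const_mul (y ^ 2))
  rw [one_pow, mul_one] at hlim
  obtain ⟨δ₀, hδ₀, hsub⟩ := mem_nhdsGT_iff_exists_Ioo_subset.1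
    (nhdsGT_le_nhdsNE 0 (hlim.eventually (eventually_gt_nhds hc)))
  exact ⟨δ₀, hδ₀, fun δ h₀ h₁ => hsub ⟨h₀, h₁⟩⟩

theorem ofReal_cpow_one_div_two {x : ℝ} (hx : 0 ≤ x) : (x : ℂ) ^ ((1 : ℂ) / 2) = (√x : ℝ) := by
  rw [Real.sqrt_eq_rpow, ofReal_cpow hx]
  norm_num

theorem sq_sub_div_sq_pos {ω C k : ℝ} (hω : 0 ≤ ω) (hC : 0 < C) (hk : ω / C < k) :
    0 < k ^ 2 - ω ^ 2 / C ^ 2 := by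
  rw [sub_pos, ← div_pow]
  exact pow_lt_pow_left₀ hk (by positivity) two_ne_zero

theorem sq_add_sq_sub_mul_lt {l₁ l₂ x y κ : ℝ} (hl₁ : 0 < l₁) (hl₂ : 0 < l₂)
    (h : (2 * x) ^ 2 < (κ * (l₁ + l₂)) ^ 2) :
    x ^ 2 + y ^ 2 - l₁ * l₂ * κ ^ 2 < x ^ 2 * ((l₂ - l₁) / (l₁ + l₂)) ^ 2 + y ^ 2 := by
  have hl : 0 < l₁ + l₂ := add_pos hl₁ hl₂
  rw [div_pow, ← sub_pos]
  field_simp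
  nlinarith [mul_pos (mul_pos hl₁ hl₂) (sub_pos.2 h)]

/-- The numerator of `b11`; when `λ₁, λ₂` are real, `b22 = conj Nq / Dq`. -/
def Nq (ω Cs Cp k : ℝ) : ℂ :=
  -Z1 ω Cs Cp k - Z2 ω Cs Cp k -
    Complex.I * (ω : ℂ) ^ 3 * (lam1 ω Cs k - lam2 ω Cp k * (Cp : ℂ) / (Cs : ℂ))

section Navier

variable {ω Cs Cp k : ℝ}

theorem lam1_sq (ω Cs k : ℝ) : lam1 ω Cs k ^ 2 = ((k ^ 2 - ω ^ 2 / Cs ^ 2 : ℝ) : ℂ) := by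
  rw [lam1, one_div]
  exact_mod_cast cpow_nat_inv_pow _ two_ne_zero

theorem Kq_sq (hCs : Cs ≠ 0) : Kq ω Cs Cp k ^ 2
    = 4 * Z1 ω Cs Cp k * (4 * Cs ^ 3 * k ^ 2 + Cp * ω ^ 2) - 4 * ω ^ 6 * Cp / Cs := by
  have hCs' : (Cs : ℂ) ≠ 0 := ofReal_ne_zero.2 hCs
  have hl := lam1_sq ω Cs k
  push_cast at hl
  rw [Kq, Z1, hl]
  field_simp
  ring

theorem b11_mul_b22_sub_b12_mul_b21 (hCs : Cs ≠ 0) (hD : Dq ω Cs Cp k ≠ 0) :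
    b11 ω Cs Cp k * b22 ω Cs Cp k - b12 ω Cs Cp k * b21 ω Cs Cp k
      = (-Z1 ω Cs Cp k + Z2 ω Cs Cp k -
          I * (ω : ℂ) ^ 3 * (lam1 ω Cs k + lam2 ω Cp k * (Cp : ℂ) / (Cs : ℂ))) / Dq ω Cs Cp k := by
  rw [b11, b22, b12, b21, eq_div_iff hD]
  field_simp
  rw [Dq, Z2]
  linear_combination (-(lam1 ω Cs k * lam2 ω Cp k)) * Kq_sq (Cp := Cp) (k := k) hCs
    + lam1 ω Cs k * lam2 ω Cp k * (4 * ω ^ 6 * Cp / Cs + Kq ω Cs Cp k ^ 2) * I_sq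

end Navier

section RealRegime

variable {ω Cs Cp k l₁ l₂ : ℝ}

theorem Z1_eq_ofReal (h₁ : lam1 ω Cs k = l₁) :
    Z1 ω Cs Cp k = ((Cs ^ 3 * (k ^ 2 + l₁ ^ 2) ^ 2 + ω ^ 2 * Cp * k ^ 2 : ℝ) : ℂ) := by
  rw [Z1, h₁]; push_cast; ring

theorem Z2_eq_ofReal (h₁ : lam1 ω Cs k = l₁) (h₂ : lam2 ω Cp k = l₂) :
    Z2 ω Cs Cp k = (((4 * Cs ^ 3 * k ^ 2 + Cp * ω ^ 2) * l₁ * l₂ : ℝ) : ℂ) := by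
  rw [Z2, h₁, h₂]; push_cast; ring

theorem Kq_eq_ofReal (h₁ : lam1 ω Cs k = l₁) :
    Kq ω Cs Cp k = ((2 * k * (Cp * ω ^ 2 + 2 * Cs ^ 3 * (k ^ 2 + l₁ ^ 2)) : ℝ) : ℂ) := by
  rw [Kq, h₁]; push_cast; ring

theorem Nq_eq_ofReal (h₁ : lam1 ω Cs k = l₁) (h₂ : lam2 ω Cp k = l₂) :
    Nq ω Cs Cp k = ((-(Cs ^ 3 * (k ^ 2 + l₁ ^ 2) ^ 2 + ω ^ 2 * Cp * k ^ 2
        + (4 * Cs ^ 3 * k ^ 2 + Cp * ω ^ 2) * l₁ * l₂) : ℝ) : ℂ)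
      + ((-(ω ^ 3 * (l₁ - l₂ * Cp / Cs)) : ℝ) : ℂ) * I := by
  rw [Nq, Z1_eq_ofReal h₁, Z2_eq_ofReal h₁ h₂, h₁, h₂]; push_cast; ring

theorem Dq_eq_ofReal (h₁ : lam1 ω Cs k = l₁) (h₂ : lam2 ω Cp k = l₂) :
    Dq ω Cs Cp k = (((4 * Cs ^ 3 * k ^ 2 + Cp * ω ^ 2) * l₁ * l₂
        - (Cs ^ 3 * (k ^ 2 + l₁ ^ 2) ^ 2 + ω ^ 2 * Cp * k ^ 2) : ℝ) : ℂ)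
      + ((ω ^ 3 * (l₁ + l₂ * Cp / Cs) : ℝ) : ℂ) * I := by
  rw [Dq, Z1_eq_ofReal h₁, Z2_eq_ofReal h₁ h₂, h₁, h₂]; push_cast; ring

theorem conj_Nq (h₁ : lam1 ω Cs k = l₁) (h₂ : lam2 ω Cp k = l₂) :
    conj (Nq ω Cs Cp k) = -Z1 ω Cs Cp k - Z2 ω Cs Cp k +
      I * (ω : ℂ) ^ 3 * (lam1 ω Cs k - lam2 ω Cp k * (Cp : ℂ) / (Cs : ℂ)) := by
  rw [Nq_eq_ofReal h₁ h₂, Z1_eq_ofReal h₁, Z2_eq_ofReal h₁ h₂, h₁, h₂]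
  simp only [map_add, map_mul, conj_ofReal, conj_I]
  push_cast; ring

theorem conj_Dq (h₁ : lam1 ω Cs k = l₁) (h₂ : lam2 ω Cp k = l₂) :
    conj (Dq ω Cs Cp k) = -Z1 ω Cs Cp k + Z2 ω Cs Cp k -
      I * (ω : ℂ) ^ 3 * (lam1 ω Cs k + lam2 ω Cp k * (Cp : ℂ) / (Cs : ℂ)) := by
  rw [Dq_eq_ofReal h₁ h₂, Z1_eq_ofReal h₁, Z2_eq_ofReal h₁ h₂, h₁, h₂]
  simp only [map_add, map_mul, conj_ofReal, conj_I]
  push_cast; ring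

theorem Dq_ne_zero (h₁ : lam1 ω Cs k = l₁) (h₂ : lam2 ω Cp k = l₂) (hω : 0 < ω) (hCs : 0 < Cs)
    (hCp : 0 < Cp) (hl₁ : 0 < l₁) (hl₂ : 0 ≤ l₂) : Dq ω Cs Cp k ≠ 0 := by
  rw [Dq_eq_ofReal h₁ h₂, ← normSq_pos, normSq_add_mul_I]
  positivity

theorem normSq_Dq (h₁ : lam1 ω Cs k = l₁) (h₂ : lam2 ω Cp k = l₂) (hCs : Cs ≠ 0) :
    normSq (Dq ω Cs Cp k) = normSq (Nq ω Cs Cp k)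
      - l₁ * l₂ * (2 * k * (Cp * ω ^ 2 + 2 * Cs ^ 3 * (k ^ 2 + l₁ ^ 2))) ^ 2 := by
  have hK := Kq_sq (ω := ω) (Cp := Cp) (k := k) hCs
  rw [Kq_eq_ofReal h₁, Z1_eq_ofReal h₁] at hK
  have hK' : (2 * k * (Cp * ω ^ 2 + 2 * Cs ^ 3 * (k ^ 2 + l₁ ^ 2))) ^ 2
      = 4 * (Cs ^ 3 * (k ^ 2 + l₁ ^ 2) ^ 2 + ω ^ 2 * Cp * k ^ 2) * (4 * Cs ^ 3 * k ^ 2 + Cp * ω ^ 2)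
        - 4 * ω ^ 6 * Cp / Cs := by
    exact_mod_cast hK
  rw [Dq_eq_ofReal h₁ h₂, Nq_eq_ofReal h₁ h₂, normSq_add_mul_I, normSq_add_mul_I]
  linear_combination l₁ * l₂ * hK'

theorem Xd_eq (h₁ : lam1 ω Cs k = l₁) (h₂ : lam2 ω Cp k = l₂) (δ : ℝ) :
    Xd ω Cs Cp k δ = (rexp (-l₁ * δ) * Nq ω Cs Cp k - rexp (-l₂ * δ) * conj (Nq ω Cs Cp k))
      / Dq ω Cs Cp k := by
  rw [Xd, b22, ← conj_Nq h₁ h₂, show b11 ω Cs Cp k = Nq ω Cs Cp k / Dq ω Cs Cp k from rfl,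
    h₁, h₂]
  push_cast
  ring

theorem Yd_eq (h₁ : lam1 ω Cs k = l₁) (h₂ : lam2 ω Cp k = l₂) (hCs : Cs ≠ 0)
    (hD : Dq ω Cs Cp k ≠ 0) (δ : ℝ) :
    Yd ω Cs Cp k δ = rexp (-l₁ * δ) * rexp (-l₂ * δ) * conj (Dq ω Cs Cp k) / Dq ω Cs Cp k := by
  rw [Yd, b11_mul_b22_sub_b12_mul_b21 hCs hD, ← conj_Dq h₁ h₂, h₁, h₂]
  push_cast
  rw [← Complex.exp_add]
  ring_nf

theorem normSq_Dq_lt (h₁ : lam1 ω Cs k = l₁) (h₂ : lam2 ω Cp k = l₂) (hCs : 0 < Cs)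
    (hCp : 0 < Cp) (hl₁ : 0 < l₁) (hl₂ : 0 < l₂)
    (hneg : 2 * ((Cs ^ 3 * (k ^ 2 + l₁ ^ 2) ^ 2 + ω ^ 2 * Cp * k ^ 2)
        + (4 * Cs ^ 3 * k ^ 2 + Cp * ω ^ 2) * l₁ * l₂)
      - 2 * k * (Cp * ω ^ 2 + 2 * Cs ^ 3 * (k ^ 2 + l₁ ^ 2)) * (l₁ + l₂) < 0) :
    normSq (Dq ω Cs Cp k)
      < (Nq ω Cs Cp k).re ^ 2 * ((l₂ - l₁) / (l₁ + l₂)) ^ 2 + (Nq ω Cs Cp k).im ^ 2 := by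
  rw [normSq_Dq h₁ h₂ hCs.ne', normSq_apply, ← sq, ← sq]
  refine sq_add_sq_sub_mul_lt hl₁ hl₂ ?_
  have hre : (Nq ω Cs Cp k).re = -((Cs ^ 3 * (k ^ 2 + l₁ ^ 2) ^ 2 + ω ^ 2 * Cp * k ^ 2)
        + (4 * Cs ^ 3 * k ^ 2 + Cp * ω ^ 2) * l₁ * l₂) := by
    rw [Nq_eq_ofReal h₁ h₂, add_re, mul_I_re, ofReal_re, ofReal_im, neg_zero, add_zero]
  rw [hre, mul_neg, neg_sq]
  exact pow_lt_pow_left₀ (by linarith) (by positivity) two_ne_zero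

end RealRegime

theorem taylor_overlapping_divergence_above_shear_general
    (ω Cs Cp k : ℝ)
    (hω : 0 < ω) (hCs : 0 < Cs) (hCsCp : Cs < Cp)
    (hk : ω / Cs < k)
    (hneg : 2 * ((Cs ^ 3 * (k ^ 2 + Real.sqrt (k ^ 2 - ω ^ 2 / Cs ^ 2) ^ 2) ^ 2
          + ω ^ 2 * Cp * k ^ 2)
        + (4 * Cs ^ 3 * k ^ 2 + Cp * ω ^ 2) * Real.sqrt (k ^ 2 - ω ^ 2 / Cs ^ 2)
            * Real.sqrt (k ^ 2 - ω ^ 2 / Cp ^ 2))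
      - 2 * k * (Cp * ω ^ 2 + 2 * Cs ^ 3 * (k ^ 2 + Real.sqrt (k ^ 2 - ω ^ 2 / Cs ^ 2) ^ 2))
          * (Real.sqrt (k ^ 2 - ω ^ 2 / Cs ^ 2) + Real.sqrt (k ^ 2 - ω ^ 2 / Cp ^ 2)) < 0) :
    ∃ δ₀ > 0, ∀ δ : ℝ, 0 < δ → δ < δ₀ →
      ∃ z : ℂ, Qd ω Cs Cp k δ z = 0 ∧ 1 < ‖z‖ := by
  have hCp : 0 < Cp := hCs.trans hCsCp
  have hr₁ := sq_sub_div_sq_pos hω.le hCs hk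
  have hr₂ := sq_sub_div_sq_pos hω.le hCp ((div_lt_div_of_pos_left hω hCs hCsCp).trans hk)
  have h₁ : lam1 ω Cs k = √(k ^ 2 - ω ^ 2 / Cs ^ 2) := ofReal_cpow_one_div_two hr₁.le
  have h₂ : lam2 ω Cp k = √(k ^ 2 - ω ^ 2 / Cp ^ 2) := ofReal_cpow_one_div_two hr₂.le
  have hl₁ := Real.sqrt_pos.2 hr₁
  have hl₂ := Real.sqrt_pos.2 hr₂
  have hD := Dq_ne_zero h₁ h₂ hω hCs hCp hl₁ hl₂.le
  obtain ⟨δ₀, hδ₀, hlt⟩ := exists_forall_lt_exp_ratio (add_pos hl₁ hl₂).ne'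
    (normSq_Dq_lt h₁ h₂ hCs hCp hl₁ hl₂ hneg)
  refine ⟨δ₀, hδ₀, fun δ hδ hδδ₀ => ?_⟩
  have huv : rexp (-√(k ^ 2 - ω ^ 2 / Cs ^ 2) * δ) * rexp (-√(k ^ 2 - ω ^ 2 / Cp ^ 2) * δ) < 1 := by
    rw [← Real.exp_add, Real.exp_lt_one_iff]
    nlinarith
  obtain ⟨z, hz, hz₁⟩ := exists_root_one_lt_norm_of_normSq_lt hD (Nq ω Cs Cp k)
    (Real.exp_pos _).le (Real.exp_pos _).le huv (hlt δ hδ hδδ₀)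
  refine ⟨z, ?_, hz₁⟩
  rwa [Qd, Xd_eq h₁ h₂, Yd_eq h₁ h₂ hCs.ne' hD]

/-- **Theorem 3.4, last case**: let `k > ω/Cs` (so `λ₁, λ₂ > 0` are real) be such that
`2(Z₁ + Z₂) − K(λ₁ + λ₂) < 0` (real quantities). Then there is `δ₀ > 0` such that for every
overlap `0 < δ < δ₀` the quadratic `Q_δ(z) = z² − (X_δ² + 2Y_δ)z + Y_δ²` has a root of
modulus strictly greater than `1`: the overlapping Schwarz method with zeroth-order Taylor
transmission conditions diverges at such frequencies when the overlap is too small. -/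
theorem taylor_overlapping_divergence_above_shear
    (ω Cs Cp k : ℝ)
    (hω : 0 < ω) (hCs : 0 < Cs) (hCsCp : Cs < Cp) (hCp2 : 2 * Cs ^ 2 < Cp ^ 2)
    (hk : ω / Cs < k)
    (hD : Dq ω Cs Cp k ≠ 0)
    (hneg : 2 * ((Cs ^ 3 * (k ^ 2 + Real.sqrt (k ^ 2 - ω ^ 2 / Cs ^ 2) ^ 2) ^ 2
          + ω ^ 2 * Cp * k ^ 2)
        + (4 * Cs ^ 3 * k ^ 2 + Cp * ω ^ 2) * Real.sqrt (k ^ 2 - ω ^ 2 / Cs ^ 2)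
            * Real.sqrt (k ^ 2 - ω ^ 2 / Cp ^ 2))
      - 2 * k * (Cp * ω ^ 2 + 2 * Cs ^ 3 * (k ^ 2 + Real.sqrt (k ^ 2 - ω ^ 2 / Cs ^ 2) ^ 2))
          * (Real.sqrt (k ^ 2 - ω ^ 2 / Cs ^ 2) + Real.sqrt (k ^ 2 - ω ^ 2 / Cp ^ 2)) < 0) :
    ∃ δ₀ > 0, ∀ δ : ℝ, 0 < δ → δ < δ₀ →
      ∃ z : ℂ, Qd ω Cs Cp k δ z = 0 ∧ 1 < ‖z‖ :=
  taylor_overlapping_divergence_above_shear_general ω Cs Cp k hω hCs hCsCp hk hneg
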